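/- For every finite simple graph G, the independence polynomial I(G∘2K_1; x) of the corona of G with the edgeless graph on two vertices is unimodal. -/

import Mathlib

open Polynomial Finset
open scoped Classical

/-- A set of vertices is independent if its elements are pairwise non-adjacent. -/
def IsIndepSet {V : Type*} (G : SimpleGraph V) (s : Finset V) : Prop :=
  ∀ u ∈ s, ∀ v ∈ s, u ≠ v → ¬ G.Adj u v

/-- The independence number: maximum cardinality of an independent set. -/
noncomputable def indepNum {V : Type*} [Fintype V] (G : SimpleGraph V) : ℕ :=
  (Finset.univ.filter (fun s : Finset V => IsIndepSet G s)).sup Finset.card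

/-- The number of independent sets of cardinality `k`. -/
noncomputable def indepCount {V : Type*} [Fintype V] (G : SimpleGraph V) (k : ℕ) : ℕ :=
  (Finset.univ.filter (fun s : Finset V => IsIndepSet G s ∧ s.card = k)).card

/-- The independence polynomial `I(G;x) = ∑ s_k x^k`. -/
noncomputable def indepPoly {V : Type*} [Fintype V] (G : SimpleGraph V) : Polynomial ℝ :=
  ∑ k ∈ Finset.range (indepNum G + 1), Polynomial.C (indepCount G k : ℝ) * Polynomial.X ^ k

/-- The corona `G ∘ H`: take `G` together with `|V(G)|` disjoint copies of `H`,
joining each vertex `v` of `G` to all vertices of the `v`-th copy of `H`. -/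
def corona {V W : Type*} (G : SimpleGraph V) (H : SimpleGraph W) :
    SimpleGraph (V ⊕ V × W) where
  Adj x y :=
    match x, y with
    | Sum.inl u, Sum.inl v => G.Adj u v
    | Sum.inl u, Sum.inr (v, _) => u = v
    | Sum.inr (v, _), Sum.inl u => u = v
    | Sum.inr (v, w), Sum.inr (v', w') => v = v' ∧ H.Adj w w'
  symm := ⟨by
    rintro (u | ⟨v, w⟩) (u' | ⟨v', w'⟩) h
    · exact G.symm.symm _ _ h
    · exact h
    · exact h
    · exact ⟨h.1.symm, H.symm.symm _ _ h.2⟩⟩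
  loopless := ⟨by
    rintro (u | ⟨v, w⟩) h
    · exact G.loopless.irrefl u h
    · exact H.loopless.irrefl w h.2⟩

/-- The disjoint union of two graphs. -/
def disjUnion {V W : Type*} (G : SimpleGraph V) (H : SimpleGraph W) :
    SimpleGraph (V ⊕ W) where
  Adj x y :=
    match x, y with
    | Sum.inl a, Sum.inl b => G.Adj a b
    | Sum.inr a, Sum.inr b => H.Adj a b
    | _, _ => False
  symm := ⟨by
    rintro (a | a) (b | b) h
    · exact G.symm.symm _ _ h
    · exact h.elim
    · exact h.elim
    · exact H.symm.symm _ _ h⟩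
  loopless := ⟨by
    rintro (a | a) h
    · exact G.loopless.irrefl a h
    · exact H.loopless.irrefl a h⟩

/-- The Zykov sum (join) of two graphs. -/
def zykovSum {V W : Type*} (G : SimpleGraph V) (H : SimpleGraph W) :
    SimpleGraph (V ⊕ W) where
  Adj x y :=
    match x, y with
    | Sum.inl a, Sum.inl b => G.Adj a b
    | Sum.inr a, Sum.inr b => H.Adj a b
    | _, _ => True
  symm := ⟨by
    rintro (a | a) (b | b) h
    · exact G.symm.symm _ _ h
    · trivial
    · trivial
    · exact H.symm.symm _ _ h⟩
  loopless := ⟨by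
    rintro (a | a) h
    · exact G.loopless.irrefl a h
    · exact H.loopless.irrefl a h⟩

/-- `K_p - e`: the complete graph on `Fin p` minus the edge joining vertices `0` and `1`. -/
def completeMinusEdge (p : ℕ) : SimpleGraph (Fin p) where
  Adj a b := a ≠ b ∧ ¬(a.val ≤ 1 ∧ b.val ≤ 1)
  symm := ⟨fun a b ⟨h1, h2⟩ => ⟨h1.symm, fun ⟨hb, ha⟩ => h2 ⟨ha, hb⟩⟩⟩
  loopless := ⟨fun a ⟨h, _⟩ => h rfl⟩

/-- The clique number of a graph. -/
noncomputable def cliqueNum {V : Type*} [Fintype V] (G : SimpleGraph V) : ℕ :=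
  (Finset.univ.filter (fun s : Finset V => G.IsClique ↑s)).sup Finset.card

/-- A graph is perfect if every induced subgraph has chromatic number
equal to its clique number. -/
def IsPerfect {V : Type*} [Fintype V] (G : SimpleGraph V) : Prop :=
  ∀ s : Set V, (G.induce s).chromaticNumber = (cliqueNum (G.induce s) : ℕ∞)

/-- The coefficient sequence `(a_0, …, a_n)` of a polynomial (indexed up to its
degree `n`) is symmetric, i.e. `a_i = a_{n-i}`. -/
def CoeffSymmetric (P : Polynomial ℝ) : Prop :=
  ∀ i ≤ P.natDegree, P.coeff i = P.coeff (P.natDegree - i)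

/-- The coefficient sequence of a polynomial is unimodal with mode `k`. -/
def IsMode (P : Polynomial ℝ) (k : ℕ) : Prop :=
  k ≤ P.natDegree ∧ (∀ i, i < k → P.coeff i ≤ P.coeff (i + 1)) ∧
    (∀ i, k ≤ i → i < P.natDegree → P.coeff (i + 1) ≤ P.coeff i)

/-- The coefficient sequence of a polynomial is unimodal. -/
def CoeffUnimodal (P : Polynomial ℝ) : Prop :=
  ∃ k, IsMode P k

/-- `k` is the unique index achieving the maximal coefficient of `P`. -/
def IsUniqueMode (P : Polynomial ℝ) (k : ℕ) : Prop :=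
  k ≤ P.natDegree ∧ ∀ j ≤ P.natDegree, j ≠ k → P.coeff j < P.coeff k

/-- The polynomial has a unique mode. -/
def HasUniqueMode (P : Polynomial ℝ) : Prop :=
  ∃ k, IsUniqueMode P k

/-!
An independent set of `G ∘ 2K₁` is an independent set `A` of `G` together with any set of
pendant vertices not attached to `A`; there are `2 (n - |A|)` of those, so
`s_k = ∑_A C(2 (n - |A|), k - |A|)`. As a function of `k`, each summand is the binomial row
`C(2m, ·)`, whose mode is `m = n - |A|`, delayed by `|A|`; so every summand has mode `n`, and
hence so does their sum.
-/

def UnimodalAt {M : Type*} [Preorder M] (f : ℕ → M) (k : ℕ) : Prop :=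
  (∀ i < k, f i ≤ f (i + 1)) ∧ ∀ i, k ≤ i → f (i + 1) ≤ f i

namespace UnimodalAt

theorem sum {ι M : Type*} [AddCommMonoid M] [PartialOrder M] [IsOrderedAddMonoid M]
    {s : Finset ι} {f : ι → ℕ → M} {k : ℕ} (h : ∀ a ∈ s, UnimodalAt (f a) k) :
    UnimodalAt (fun i => ∑ a ∈ s, f a i) k :=
  ⟨fun i hi => sum_le_sum fun a ha => (h a ha).1 i hi,
    fun i hi => sum_le_sum fun a ha => (h a ha).2 i hi⟩

theorem shift {M : Type*} [AddCommMonoid M] [PartialOrder M] [CanonicallyOrderedAdd M]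
    {f : ℕ → M} {k : ℕ} (h : UnimodalAt f k) (a : ℕ) :
    UnimodalAt (fun j => if a ≤ j then f (j - a) else 0) (k + a) := by
  refine ⟨fun i hi => ?_, fun i hi => ?_⟩ <;> dsimp only
  · by_cases hai : a ≤ i
    · rw [if_pos hai, if_pos (by omega), show i + 1 - a = i - a + 1 by omega]
      exact h.1 _ (by omega)
    · rw [if_neg hai]
      exact zero_le
  · rw [if_pos (by omega), if_pos (by omega), show i + 1 - a = i - a + 1 by omega]
    exact h.2 _ (by omega)

end UnimodalAt

theorem unimodalAt_choose_mul_two (m : ℕ) : UnimodalAt (fun j => (m * 2).choose j) m := by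
  -- `C(n, i + 1) (i + 1) = C(n, i) (n - i)`, and `n - i` versus `i + 1` flips exactly at `i = m`.
  have key := Nat.choose_succ_right_eq (m * 2)
  refine ⟨fun i hi => ?_, fun i hi => ?_⟩ <;>
    refine le_of_mul_le_mul_right (a := i + 1) ?_ i.succ_pos <;>
    rw [key] <;>
    exact Nat.mul_le_mul_left _ (by omega)

theorem IsIndepSet.card_le_indepNum {V : Type*} [Fintype V] {G : SimpleGraph V} {s : Finset V}
    (hs : IsIndepSet G s) : s.card ≤ indepNum G :=
  le_sup (f := Finset.card) (mem_filter.2 ⟨mem_univ s, hs⟩)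

section Corona

variable {V W : Type*} (G : SimpleGraph V)

theorem isIndepSet_corona_bot_iff (s : Finset (V ⊕ V × W)) :
    IsIndepSet (corona G (⊥ : SimpleGraph W)) s ↔
      IsIndepSet G s.toLeft ∧ ∀ p ∈ s.toRight, p.1 ∉ s.toLeft := by
  constructor
  · intro h
    refine ⟨fun u hu v hv huv => h _ (mem_toLeft.1 hu) _ (mem_toLeft.1 hv) (by simpa), ?_⟩
    rintro ⟨v, w⟩ hp hv
    exact h (.inl v) (mem_toLeft.1 hv) (.inr (v, w)) (mem_toRight.1 hp) (by simp) rfl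
  · rintro ⟨hG, hW⟩ (u | ⟨v, w⟩) hx (u' | ⟨v', w'⟩) hy hne hadj
    · exact hG u (mem_toLeft.2 hx) u' (mem_toLeft.2 hy) (by rintro rfl; exact hne rfl) hadj
    · obtain rfl : u = v' := hadj
      exact hW (u, w') (mem_toRight.2 hy) (mem_toLeft.2 hx)
    · obtain rfl : u' = v := hadj
      exact hW (u', w) (mem_toRight.2 hx) (mem_toLeft.2 hy)
    · exact hadj.2.elim

variable [Fintype V] [Fintype W]

theorem card_indep_corona_bot_toLeft_eq {A : Finset V} (hA : IsIndepSet G A) (k : ℕ) :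
    #{s ∈ univ.filter (fun s => IsIndepSet (corona G (⊥ : SimpleGraph W)) s ∧ #s = k) |
        s.toLeft = A} =
      if #A ≤ k then ((Fintype.card V - #A) * Fintype.card W).choose (k - #A) else 0 := by
  split_ifs with hAk
  · rw [← card_compl A, ← card_univ (α := W), ← card_product, ← card_powersetCard]
    refine card_nbij' toRight (A.disjSum ·) (fun s hs => ?_) (fun B hB => ?_)
      (fun s hs => ?_) (fun B _ => toRight_disjSum)
    · simp only [mem_coe, mem_filter, mem_univ, true_and] at hs
      obtain ⟨⟨hind, rfl⟩, rfl⟩ := hs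
      have hright := ((isIndepSet_corona_bot_iff G s).1 hind).2
      refine mem_powersetCard.2 ⟨fun p hp => ?_, ?_⟩
      · exact mem_product.2 ⟨mem_compl.2 (hright p hp), mem_univ _⟩
      · have := s.card_toLeft_add_card_toRight
        omega
    · obtain ⟨hsub, hcard⟩ := mem_powersetCard.1 hB
      simp only [mem_coe, mem_filter, mem_univ, true_and, toLeft_disjSum, and_true]
      refine ⟨(isIndepSet_corona_bot_iff G _).2 ⟨?_, fun p hp => ?_⟩, ?_⟩
      · simpa using hA
      · simp only [toRight_disjSum, toLeft_disjSum] at hp ⊢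
        exact mem_compl.1 (mem_product.1 (hsub hp)).1
      · rw [card_disjSum]
        omega
    · simp only [mem_coe, mem_filter, mem_univ, true_and] at hs
      rw [← hs.2]
      exact s.toLeft_disjSum_toRight
  · refine card_eq_zero.2 (eq_empty_of_forall_notMem fun s hs => hAk ?_)
    simp only [mem_filter, mem_univ, true_and] at hs
    obtain ⟨⟨_, rfl⟩, rfl⟩ := hs
    exact s.card_toLeft_le

theorem indepCount_corona_bot (k : ℕ) :
    indepCount (corona G (⊥ : SimpleGraph W)) k =
      ∑ A ∈ univ.filter (IsIndepSet G),
        if #A ≤ k then ((Fintype.card V - #A) * Fintype.card W).choose (k - #A) else 0 := by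
  rw [indepCount, card_eq_sum_card_fiberwise (f := toLeft) (t := univ.filter (IsIndepSet G))]
  · exact sum_congr rfl fun A hA => card_indep_corona_bot_toLeft_eq G (mem_filter.1 hA).2 k
  · intro s hs
    simp only [mem_coe, mem_filter, mem_univ, true_and] at hs ⊢
    exact ((isIndepSet_corona_bot_iff G s).1 hs.1).1

theorem card_le_indepNum_corona_bot (w : W) :
    Fintype.card V ≤ indepNum (corona G (⊥ : SimpleGraph W)) := by
  have hind : IsIndepSet (corona G (⊥ : SimpleGraph W)) ((∅ : Finset V).disjSum (univ ×ˢ {w})) :=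
    (isIndepSet_corona_bot_iff G _).2 ⟨by simp [IsIndepSet], by simp⟩
  simpa using hind.card_le_indepNum

end Corona

theorem unimodalAt_indepCount_corona_bot_fin_two {V : Type*} [Fintype V] (G : SimpleGraph V) :
    UnimodalAt (indepCount (corona G (⊥ : SimpleGraph (Fin 2)))) (Fintype.card V) := by
  rw [_root_.funext (indepCount_corona_bot G)]
  refine UnimodalAt.sum fun A _ => ?_
  have hA : Fintype.card V - #A + #A = Fintype.card V := Nat.sub_add_cancel (card_le_univ A)
  simpa only [hA, Fintype.card_fin] using
    (unimodalAt_choose_mul_two (Fintype.card V - #A)).shift #A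

/-- `I(G ∘ 2K₁; x)` is unimodal for every graph `G`. -/
theorem corona_2K1_unimodal {V : Type*} [Fintype V] (G : SimpleGraph V) :
    let s := indepCount (corona G (⊥ : SimpleGraph (Fin 2)))
    let α := indepNum (corona G (⊥ : SimpleGraph (Fin 2)))
    ∃ k ≤ α, (∀ i, i < k → s i ≤ s (i + 1)) ∧
      (∀ i, k ≤ i → i < α → s (i + 1) ≤ s i) := by
  obtain ⟨hinc, hdec⟩ := unimodalAt_indepCount_corona_bot_fin_two G
  exact ⟨_, card_le_indepNum_corona_bot G 0, hinc, fun i hi _ => hdec i hi⟩
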